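/- arXiv:2512.23528 — 4 statements merged into one kernel-verified Lean document; each statement's English description precedes it below -/
import Mathlib

section
/- Let α, β ∈ ℝ and define s = 2α(√(4α²+β²+1) − β)/(4α²+1) and t = (√(4α²+β²+1) + 8α²β + β)/(4α²+1). If s² ≠ 1 and t ≠ 0, then α = st/(2(1−s²)) and β = (s²+t²−1)/(2t). -/
/-!
Write `D = 4α² + 1` and `r = √(D + β²)`. Since `(r - β)(r + β) = D`, the number
`u = (r - β) / D` is a root of `D u² + 2 β u = 1`, and the definitions read `s = 2 α u`,
`t = u + 2 β`. Hence `u² + 2 β u = 1 - s²`, which gives `s t = 2 α (1 - s²)` and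
`s² + t² - 1 = 2 β t`.
-/

theorem mul_sq_add_two_mul_eq_one_of_sq_eq {K : Type*} [Field K] {D β r : K}
    (hD : D ≠ 0) (hr : r ^ 2 = D + β ^ 2) :
    D * ((r - β) / D) ^ 2 + 2 * β * ((r - β) / D) = 1 := by
  field_simp
  linear_combination hr

section

variable {R : Type*} [CommRing R] {α β u s t : R}
  (hu : (4 * α ^ 2 + 1) * u ^ 2 + 2 * β * u = 1) (hs : s = 2 * α * u) (ht : t = u + 2 * β)
include hu hs ht

theorem mul_eq_two_mul_one_sub_sq_of_quadratic : s * t = 2 * α * (1 - s ^ 2) := by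
  subst hs ht
  linear_combination 2 * α * hu

theorem sq_add_sq_sub_one_eq_of_quadratic : s ^ 2 + t ^ 2 - 1 = 2 * β * t := by
  subst hs ht
  linear_combination hu

end

theorem invert_change_of_variables (α β s t : ℝ)
    (hs : s = 2 * α * (Real.sqrt (4 * α ^ 2 + β ^ 2 + 1) - β) / (4 * α ^ 2 + 1))
    (ht : t = (Real.sqrt (4 * α ^ 2 + β ^ 2 + 1) + 8 * α ^ 2 * β + β) / (4 * α ^ 2 + 1))
    (hs1 : s ^ 2 ≠ 1) (ht0 : t ≠ 0) :
    α = s * t / (2 * (1 - s ^ 2)) ∧ β = (s ^ 2 + t ^ 2 - 1) / (2 * t) := by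
  set r := Real.sqrt (4 * α ^ 2 + β ^ 2 + 1)
  have hD : (4 * α ^ 2 + 1 : ℝ) ≠ 0 := by positivity
  have hr : r ^ 2 = (4 * α ^ 2 + 1) + β ^ 2 := by
    rw [Real.sq_sqrt (by positivity)]
    ring
  have hu := mul_sq_add_two_mul_eq_one_of_sq_eq hD hr
  have hs' : s = 2 * α * ((r - β) / (4 * α ^ 2 + 1)) := by rw [hs, mul_div_assoc]
  have ht' : t = (r - β) / (4 * α ^ 2 + 1) + 2 * β := by
    rw [ht]
    field_simp
    ring
  have h1 : 1 - s ^ 2 ≠ 0 := sub_ne_zero.mpr (Ne.symm hs1)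
  constructor
  · rw [mul_eq_two_mul_one_sub_sq_of_quadratic hu hs' ht']
    field_simp
  · rw [sq_add_sq_sub_one_eq_of_quadratic hu hs' ht']
    field_simp
end

section
/- Let μ be a Borel probability measure on ℝ not concentrated at a point, p > 0, G(λ) = ∫ 1/(λ−u) dμ(u), and let U ⊆ ℂ be an open set disjoint from supp(μ) on which ∫ 1/|λ−u|² dμ(u) ≤ |i+G(λ)|²/p for all λ ∈ U. Then h(λ) = λ − p/(i+G(λ)) is injective on U, and moreover |h(λ₁)−h(λ₂)| < 2|λ₁−λ₂| for distinct λ₁,λ₂ ∈ U. -/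
/-!
Write `a = i + G λ₁`, `b = i + G λ₂` and `K = ∫ dμ(u) / ((λ₁ - u)(λ₂ - u))`. The resolvent
identity gives `a - b = (λ₂ - λ₁) K`, hence `h λ₁ - h λ₂ = (λ₁ - λ₂)(1 - p K / (a b))`, and both
claims follow from `p ‖K‖ < ‖a‖ ‖b‖`. Cauchy–Schwarz in `L²(μ)` for `u ↦ 1 / (conj λ₁ - u)` and
`u ↦ 1 / (λ₂ - u)`, combined with `p ∫ dμ(u) / ‖λ - u‖² ≤ ‖i + G λ‖²`, gives the weak inequality.
Equality in Cauchy–Schwarz forces the two functions to be proportional μ-a.e., which for a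
non-Dirac μ happens only when `λ₂ = conj λ₁`; then `‖a‖² - ‖b‖² = 4 Im G λ₁ = -4 Im λ₁ ∫ dμ(u) /
‖λ₁ - u‖² ≠ 0`, and the inequality is strict for that reason instead.
-/

open MeasureTheory Complex ComplexConjugate

theorem MeasureTheory.Measure.eq_dirac_of_ae_eq {α : Type*} [MeasurableSpace α]
    [MeasurableSingletonClass α] {μ : Measure α} [IsProbabilityMeasure μ] {c : α}
    (h : ∀ᵐ x ∂μ, x = c) : μ = Measure.dirac c := by
  have hc : μ {c} = 1 := (measure_congr (ae_eq_univ.2 h)).trans measure_univ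
  calc μ = μ.restrict {c} := (Measure.restrict_eq_self_of_ae_mem h).symm
    _ = Measure.dirac c := by rw [Measure.restrict_singleton, hc, one_smul]

theorem MeasureTheory.MemLp.norm_toLp_sq {α : Type*} [MeasurableSpace α] {μ : Measure α}
    {f : α → ℂ} (hf : MemLp f 2 μ) : ‖hf.toLp f‖ ^ 2 = ∫ x, ‖f x‖ ^ 2 ∂μ := by
  rw [← inner_self_eq_norm_sq (𝕜 := ℂ), L2.inner_def, ← integral_re (L2.integrable_inner _ _)]
  refine integral_congr_ae ?_
  filter_upwards [hf.coeFn_toLp] with x hx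
  rw [hx, RCLike.inner_apply, RCLike.mul_conj]
  norm_cast

theorem MeasureTheory.MemLp.inner_toLp {α : Type*} [MeasurableSpace α] {μ : Measure α}
    {f g : α → ℂ} (hf : MemLp f 2 μ) (hg : MemLp g 2 μ) :
    inner ℂ (hf.toLp f) (hg.toLp g) = ∫ x, conj (f x) * g x ∂μ := by
  rw [L2.inner_def]
  refine integral_congr_ae ?_
  filter_upwards [hf.coeFn_toLp, hg.coeFn_toLp] with x hfx hgx
  rw [hfx, hgx, RCLike.inner_apply, mul_comm]

theorem sq_norm_integral_conj_mul_lt {α : Type*} [MeasurableSpace α] {μ : Measure α}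
    {f g : α → ℂ} (hf : MemLp f 2 μ) (hg : MemLp g 2 μ) (hf0 : ¬f =ᵐ[μ] 0)
    (hfg : ∀ r : ℂ, ¬g =ᵐ[μ] fun x => r * f x) :
    ‖∫ x, conj (f x) * g x ∂μ‖ ^ 2 < (∫ x, ‖f x‖ ^ 2 ∂μ) * ∫ x, ‖g x‖ ^ 2 ∂μ := by
  have hF : hf.toLp f ≠ 0 := fun h => hf0 <| by
    rwa [← MemLp.toLp_zero (MemLp.zero (ε := ℂ)), MemLp.toLp_eq_toLp_iff] at h
  have hdep : ∀ r : ℂ, hg.toLp g ≠ r • hf.toLp f := fun r h => hfg r <| by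
    rwa [← MemLp.toLp_const_smul, MemLp.toLp_eq_toLp_iff] at h
  have hG : hg.toLp g ≠ 0 := by simpa using hdep 0
  have hlt : ‖inner ℂ (hf.toLp f) (hg.toLp g)‖ < ‖hf.toLp f‖ * ‖hg.toLp g‖ :=
    (norm_inner_le_norm _ _).lt_of_ne fun h => by
      obtain ⟨r, -, hr⟩ := (norm_inner_eq_norm_iff hF hG).1 h
      exact hdep r hr
  rw [← hf.inner_toLp hg, ← hf.norm_toLp_sq, ← hg.norm_toLp_sq, ← mul_pow]
  exact pow_lt_pow_left₀ hlt (norm_nonneg _) two_ne_zero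

theorem lt_mul_of_le_sq_of_le_sq_of_ne {x a b : ℝ} (hx : 0 < x) (ha : 0 ≤ a) (hb : 0 ≤ b)
    (hxa : x ≤ a ^ 2) (hxb : x ≤ b ^ 2) (hab : a ≠ b) : x < a * b := by
  rcases hab.lt_or_gt with h | h <;> nlinarith

theorem sq_norm_I_add_sub_sq_norm_I_add_conj (z : ℂ) :
    ‖I + z‖ ^ 2 - ‖I + conj z‖ ^ 2 = 4 * z.im := by
  simp only [Complex.sq_norm, normSq_apply, add_re, add_im, I_re, I_im, conj_re, conj_im]
  ring

theorem sub_div_sub_sub_div_eq_mul {p l₁ l₂ a b K : ℂ} (ha : a ≠ 0) (hb : b ≠ 0)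
    (hab : a - b = (l₂ - l₁) * K) :
    (l₁ - p / a) - (l₂ - p / b) = (l₁ - l₂) * (1 - p * K / (a * b)) := by
  field_simp
  linear_combination p * hab

theorem norm_conj_sub_ofReal (l : ℂ) (u : ℝ) : ‖conj l - (u : ℂ)‖ = ‖l - (u : ℂ)‖ := by
  rw [show conj l - (u : ℂ) = conj (l - u) by simp, norm_conj]

def AwayFromSupport (μ : Measure ℝ) (l : ℂ) : Prop :=
  ∃ ε > 0, μ {u : ℝ | ‖l - (u : ℂ)‖ < ε} = 0

noncomputable def cauchyTransform (μ : Measure ℝ) (l : ℂ) : ℂ :=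
  ∫ u, 1 / (l - (u : ℂ)) ∂μ

namespace AwayFromSupport

variable {μ : Measure ℝ} {l : ℂ}

theorem exists_pos_ae_le (hl : AwayFromSupport μ l) : ∃ ε > 0, ∀ᵐ u : ℝ ∂μ, ε ≤ ‖l - (u : ℂ)‖ :=
  let ⟨ε, hε, hnull⟩ := hl
  ⟨ε, hε, ae_iff.2 (measure_mono_null (fun _ hu => not_le.1 hu) hnull)⟩

theorem ae_sub_ne_zero (hl : AwayFromSupport μ l) : ∀ᵐ u : ℝ ∂μ, l - (u : ℂ) ≠ 0 := by
  obtain ⟨ε, hε, hae⟩ := hl.exists_pos_ae_le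
  filter_upwards [hae] with u hu
  exact norm_pos_iff.1 (hε.trans_le hu)

theorem memLp_inv_sub [IsFiniteMeasure μ] (hl : AwayFromSupport μ l) (q : ENNReal) :
    MemLp (fun u : ℝ => 1 / (l - (u : ℂ))) q μ := by
  obtain ⟨ε, hε, hae⟩ := hl.exists_pos_ae_le
  refine MemLp.of_bound (by fun_prop : Measurable _).aestronglyMeasurable (1 / ε) ?_
  filter_upwards [hae] with u hu
  rw [norm_div, norm_one]
  exact one_div_le_one_div_of_le hε hu

theorem integrable_inv_sub [IsFiniteMeasure μ] (hl : AwayFromSupport μ l) :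
    Integrable (fun u : ℝ => 1 / (l - (u : ℂ))) μ :=
  memLp_one_iff_integrable.1 (hl.memLp_inv_sub 1)

theorem integrable_inv_norm_sq [IsFiniteMeasure μ] (hl : AwayFromSupport μ l) :
    Integrable (fun u : ℝ => 1 / ‖l - (u : ℂ)‖ ^ 2) μ := by
  refine ((hl.memLp_inv_sub 2).integrable_norm_pow two_ne_zero).congr ?_
  filter_upwards with u
  simp only [norm_div, norm_one, one_div_pow]

theorem conjugate (hl : AwayFromSupport μ l) : AwayFromSupport μ (conj l) := by
  simpa only [AwayFromSupport, norm_conj_sub_ofReal] using hl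

theorem integral_inv_norm_sq_pos [IsProbabilityMeasure μ] (hl : AwayFromSupport μ l) :
    0 < ∫ u, 1 / ‖l - (u : ℂ)‖ ^ 2 ∂μ := by
  rw [integral_pos_iff_support_of_nonneg (fun u => by positivity) hl.integrable_inv_norm_sq]
  have hsupp : ∀ᵐ u : ℝ ∂μ, u ∈ Function.support fun u : ℝ => 1 / ‖l - (u : ℂ)‖ ^ 2 := by
    filter_upwards [hl.ae_sub_ne_zero] with u hu
    simpa using hu
  have hfull : μ (Function.support fun u : ℝ => 1 / ‖l - (u : ℂ)‖ ^ 2) = 1 :=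
    (measure_congr (ae_eq_univ.2 hsupp)).trans measure_univ
  rw [hfull]
  exact one_pos

end AwayFromSupport

section CauchyTransform

variable {μ : Measure ℝ} {l l₁ l₂ : ℂ}

theorem cauchyTransform_sub [IsFiniteMeasure μ] (hl₁ : AwayFromSupport μ l₁)
    (hl₂ : AwayFromSupport μ l₂) :
    cauchyTransform μ l₁ - cauchyTransform μ l₂ =
      (l₂ - l₁) * ∫ u, 1 / ((l₁ - (u : ℂ)) * (l₂ - (u : ℂ))) ∂μ := by
  rw [cauchyTransform, cauchyTransform,
    ← integral_sub hl₁.integrable_inv_sub hl₂.integrable_inv_sub, ← integral_const_mul]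
  refine integral_congr_ae ?_
  filter_upwards [hl₁.ae_sub_ne_zero, hl₂.ae_sub_ne_zero] with u h₁ h₂
  field_simp
  ring

theorem cauchyTransform_conj : cauchyTransform μ (conj l) = conj (cauchyTransform μ l) := by
  rw [cauchyTransform, cauchyTransform, ← integral_conj]
  simp only [map_div₀, map_one, map_sub, conj_ofReal]

theorem im_cauchyTransform [IsFiniteMeasure μ] (hl : AwayFromSupport μ l) :
    (cauchyTransform μ l).im = -l.im * ∫ u, 1 / ‖l - (u : ℂ)‖ ^ 2 ∂μ := by
  rw [cauchyTransform, ← RCLike.im_to_complex, ← integral_im hl.integrable_inv_sub,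
    ← integral_const_mul]
  congr 1 with u
  rw [RCLike.im_to_complex, one_div, inv_im, sub_im, ofReal_im, sub_zero, normSq_eq_norm_sq]
  ring

theorem integral_inv_sub_mul_inv_sub_conj :
    ∫ u, 1 / ((l - (u : ℂ)) * (conj l - (u : ℂ))) ∂μ =
      ((∫ u, 1 / ‖l - (u : ℂ)‖ ^ 2 ∂μ : ℝ) : ℂ) := by
  rw [← integral_complex_ofReal]
  congr 1 with u
  rw [show conj l - (u : ℂ) = conj (l - u) by simp, mul_conj, normSq_eq_norm_sq]
  push_cast [one_div]
  rfl

variable [IsProbabilityMeasure μ] {p : ℝ}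

theorem exists_eq_dirac_of_ae_inv_sub_eq_mul {l' r : ℂ} (hne : l ≠ l')
    (hl : ∀ᵐ u : ℝ ∂μ, l - (u : ℂ) ≠ 0) (hl' : ∀ᵐ u : ℝ ∂μ, l' - (u : ℂ) ≠ 0)
    (h : ∀ᵐ u : ℝ ∂μ, 1 / (l' - (u : ℂ)) = r * (1 / (l - (u : ℂ)))) :
    ∃ c : ℝ, μ = Measure.dirac c := by
  have hlin : ∀ᵐ u : ℝ ∂μ, (u : ℂ) * (r - 1) = r * l' - l := by
    filter_upwards [h, hl, hl'] with u hu h₁ h₂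
    field_simp at hu
    linear_combination hu
  have hr : r - 1 ≠ 0 := by
    intro hr
    obtain ⟨u, hu⟩ := hlin.exists
    exact hne (by linear_combination hu + (l' - u) * hr)
  refine ⟨((r * l' - l) / (r - 1)).re, Measure.eq_dirac_of_ae_eq ?_⟩
  filter_upwards [hlin] with u hu
  rw [← eq_div_iff hr] at hu
  simpa using congrArg re hu

theorem sq_norm_integral_inv_sub_mul_lt (hμ : ¬∃ c : ℝ, μ = Measure.dirac c)
    (hl₁ : AwayFromSupport μ l₁) (hl₂ : AwayFromSupport μ l₂) (hne : l₂ ≠ conj l₁) :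
    ‖∫ u, 1 / ((l₁ - (u : ℂ)) * (l₂ - (u : ℂ))) ∂μ‖ ^ 2 <
      (∫ u, 1 / ‖l₁ - (u : ℂ)‖ ^ 2 ∂μ) * ∫ u, 1 / ‖l₂ - (u : ℂ)‖ ^ 2 ∂μ := by
  have hf0 : ¬(fun u : ℝ => 1 / (conj l₁ - (u : ℂ))) =ᵐ[μ] 0 := fun h => by
    obtain ⟨u, hu, hu'⟩ := (h.and hl₁.conjugate.ae_sub_ne_zero).exists
    simp [hu'] at hu
  have hfg : ∀ r : ℂ, ¬(fun u : ℝ => 1 / (l₂ - (u : ℂ))) =ᵐ[μ]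
      fun u => r * (1 / (conj l₁ - (u : ℂ))) := fun r h =>
    hμ (exists_eq_dirac_of_ae_inv_sub_eq_mul hne.symm hl₁.conjugate.ae_sub_ne_zero
      hl₂.ae_sub_ne_zero h)
  convert sq_norm_integral_conj_mul_lt (hl₁.conjugate.memLp_inv_sub 2) (hl₂.memLp_inv_sub 2)
    hf0 hfg using 3
  · exact integral_congr_ae (ae_of_all _ fun u => by simp [mul_comm])
  · ext u
    rw [norm_div, norm_one, norm_conj_sub_ofReal, one_div_pow]
  · ext u
    simp

theorem mul_norm_integral_inv_sub_mul_lt (hp : 0 < p) (hμ : ¬∃ c : ℝ, μ = Measure.dirac c)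
    (hl₁ : AwayFromSupport μ l₁) (hl₂ : AwayFromSupport μ l₂) (hne : l₁ ≠ l₂)
    (hb₁ : ∫ u, 1 / ‖l₁ - (u : ℂ)‖ ^ 2 ∂μ ≤ ‖I + cauchyTransform μ l₁‖ ^ 2 / p)
    (hb₂ : ∫ u, 1 / ‖l₂ - (u : ℂ)‖ ^ 2 ∂μ ≤ ‖I + cauchyTransform μ l₂‖ ^ 2 / p) :
    p * ‖∫ u, 1 / ((l₁ - (u : ℂ)) * (l₂ - (u : ℂ))) ∂μ‖ <
      ‖I + cauchyTransform μ l₁‖ * ‖I + cauchyTransform μ l₂‖ := by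
  rw [le_div_iff₀ hp] at hb₁ hb₂
  by_cases hconj : l₂ = conj l₁
  · subst hconj
    have hs := hl₁.integral_inv_norm_sq_pos
    simp_rw [norm_conj_sub_ofReal] at hb₂
    have him : l₁.im ≠ 0 := fun h => hne (conj_eq_iff_im.2 h).symm
    have hab : ‖I + cauchyTransform μ l₁‖ ≠ ‖I + cauchyTransform μ (conj l₁)‖ := fun h => by
      have := sq_norm_I_add_sub_sq_norm_I_add_conj (cauchyTransform μ l₁)
      rw [← cauchyTransform_conj, h, sub_self, im_cauchyTransform hl₁] at this
      exact mul_ne_zero (mul_ne_zero four_ne_zero (neg_ne_zero.2 him)) hs.ne' (by linarith)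
    rw [integral_inv_sub_mul_inv_sub_conj, norm_real, Real.norm_of_nonneg hs.le, mul_comm]
    exact lt_mul_of_le_sq_of_le_sq_of_ne (mul_pos hs hp) (norm_nonneg _) (norm_nonneg _) hb₁ hb₂
      hab
  · refine lt_of_pow_lt_pow_left₀ 2 (by positivity) ?_
    calc (p * ‖∫ u, 1 / ((l₁ - (u : ℂ)) * (l₂ - (u : ℂ))) ∂μ‖) ^ 2
        < p ^ 2 * ((∫ u, 1 / ‖l₁ - (u : ℂ)‖ ^ 2 ∂μ) * ∫ u, 1 / ‖l₂ - (u : ℂ)‖ ^ 2 ∂μ) := by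
          rw [mul_pow]
          exact mul_lt_mul_of_pos_left (sq_norm_integral_inv_sub_mul_lt hμ hl₁ hl₂ hconj)
            (by positivity)
      _ = ((∫ u, 1 / ‖l₁ - (u : ℂ)‖ ^ 2 ∂μ) * p) * ((∫ u, 1 / ‖l₂ - (u : ℂ)‖ ^ 2 ∂μ) * p) := by
          ring
      _ ≤ ‖I + cauchyTransform μ l₁‖ ^ 2 * ‖I + cauchyTransform μ l₂‖ ^ 2 :=
          mul_le_mul hb₁ hb₂ (mul_pos hl₂.integral_inv_norm_sq_pos hp).le (by positivity)
      _ = _ := (mul_pow _ _ 2).symm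

theorem I_add_cauchyTransform_ne_zero (hl : AwayFromSupport μ l)
    (hb : ∫ u, 1 / ‖l - (u : ℂ)‖ ^ 2 ∂μ ≤ ‖I + cauchyTransform μ l‖ ^ 2 / p) :
    I + cauchyTransform μ l ≠ 0 := fun h => by
  rw [h, norm_zero, zero_pow two_ne_zero, zero_div] at hb
  exact hb.not_gt hl.integral_inv_norm_sq_pos

theorem exists_norm_lt_one_sub_eq_mul (hp : 0 < p) (hμ : ¬∃ c : ℝ, μ = Measure.dirac c)
    (hl₁ : AwayFromSupport μ l₁) (hl₂ : AwayFromSupport μ l₂) (hne : l₁ ≠ l₂)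
    (hb₁ : ∫ u, 1 / ‖l₁ - (u : ℂ)‖ ^ 2 ∂μ ≤ ‖I + cauchyTransform μ l₁‖ ^ 2 / p)
    (hb₂ : ∫ u, 1 / ‖l₂ - (u : ℂ)‖ ^ 2 ∂μ ≤ ‖I + cauchyTransform μ l₂‖ ^ 2 / p) :
    ∃ q : ℂ, ‖q‖ < 1 ∧
      (l₁ - p / (I + cauchyTransform μ l₁)) - (l₂ - p / (I + cauchyTransform μ l₂)) =
        (l₁ - l₂) * (1 - q) := by
  have ha := I_add_cauchyTransform_ne_zero hl₁ hb₁
  have hb := I_add_cauchyTransform_ne_zero hl₂ hb₂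
  have hab : (I + cauchyTransform μ l₁) - (I + cauchyTransform μ l₂) =
      (l₂ - l₁) * ∫ u, 1 / ((l₁ - (u : ℂ)) * (l₂ - (u : ℂ))) ∂μ := by
    rw [add_sub_add_left_eq_sub]
    exact cauchyTransform_sub hl₁ hl₂
  refine ⟨_, ?_, sub_div_sub_sub_div_eq_mul ha hb hab⟩
  rw [norm_div, norm_mul, norm_mul, norm_real, Real.norm_of_nonneg hp.le,
    div_lt_one (by positivity)]
  exact mul_norm_integral_inv_sub_mul_lt hp hμ hl₁ hl₂ hne hb₁ hb₂

end CauchyTransform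

theorem h_injective_lipschitz_outside_general (μ : Measure ℝ) [IsProbabilityMeasure μ]
    (hnd : ¬∃ c : ℝ, μ = Measure.dirac c)
    (p : ℝ) (hp : 0 < p)
    (G : ℂ → ℂ) (hG : ∀ l : ℂ, G l = ∫ u, 1 / (l - (u : ℂ)) ∂μ)
    (U : Set ℂ)
    -- U is disjoint from the support of μ:
    (hsupp : ∀ l ∈ U, ∃ ε > 0, μ {u : ℝ | ‖l - (u : ℂ)‖ < ε} = 0)
    (hbound : ∀ l ∈ U, (∫ u, 1 / ‖l - (u : ℂ)‖ ^ 2 ∂μ) ≤ ‖Complex.I + G l‖ ^ 2 / p)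
    (h : ℂ → ℂ) (hh : ∀ l ∈ U, h l = l - p / (Complex.I + G l)) :
    Set.InjOn h U ∧
      ∀ l₁ ∈ U, ∀ l₂ ∈ U, l₁ ≠ l₂ → ‖h l₁ - h l₂‖ < 2 * ‖l₁ - l₂‖ := by
  obtain rfl : G = cauchyTransform μ := funext hG
  have key : ∀ l₁ ∈ U, ∀ l₂ ∈ U, l₁ ≠ l₂ →
      ∃ q : ℂ, ‖q‖ < 1 ∧ h l₁ - h l₂ = (l₁ - l₂) * (1 - q) := fun l₁ h₁ l₂ h₂ hne => by
    rw [hh l₁ h₁, hh l₂ h₂]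
    exact exists_norm_lt_one_sub_eq_mul hp hnd (hsupp l₁ h₁) (hsupp l₂ h₂) hne
      (hbound l₁ h₁) (hbound l₂ h₂)
  refine ⟨fun l₁ h₁ l₂ h₂ heq => by_contra fun hne => ?_, fun l₁ h₁ l₂ h₂ hne => ?_⟩
  · obtain ⟨q, hq, hdiff⟩ := key l₁ h₁ l₂ h₂ hne
    rw [heq, sub_self, eq_comm, mul_eq_zero, sub_eq_zero, sub_eq_zero] at hdiff
    rcases hdiff with hdiff | rfl
    · exact hne hdiff
    · simp at hq
  · obtain ⟨q, hq, hdiff⟩ := key l₁ h₁ l₂ h₂ hne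
    have h2 : ‖1 - q‖ < 2 := (norm_sub_le 1 q).trans_lt (by rw [norm_one]; linarith)
    rw [hdiff, norm_mul, mul_comm]
    exact mul_lt_mul_of_pos_right h2 (norm_pos_iff.2 (sub_ne_zero.2 hne))

theorem h_injective_lipschitz_outside (μ : Measure ℝ) [IsProbabilityMeasure μ]
    (hnd : ¬∃ c : ℝ, μ = Measure.dirac c)
    (p : ℝ) (hp : 0 < p)
    (G : ℂ → ℂ) (hG : ∀ l : ℂ, G l = ∫ u, 1 / (l - (u : ℂ)) ∂μ)
    (U : Set ℂ) (hU : IsOpen U)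
    -- U is disjoint from the support of μ:
    (hsupp : ∀ l ∈ U, ∃ ε > 0, μ {u : ℝ | ‖l - (u : ℂ)‖ < ε} = 0)
    (hbound : ∀ l ∈ U, (∫ u, 1 / ‖l - (u : ℂ)‖ ^ 2 ∂μ) ≤ ‖Complex.I + G l‖ ^ 2 / p)
    (h : ℂ → ℂ) (hh : ∀ l ∈ U, h l = l - p / (Complex.I + G l)) :
    Set.InjOn h U ∧
      ∀ l₁ ∈ U, ∀ l₂ ∈ U, l₁ ≠ l₂ → ‖h l₁ - h l₂‖ < 2 * ‖l₁ - l₂‖ :=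
  h_injective_lipschitz_outside_general μ hnd p hp G hG U hsupp hbound h hh
end

section
/- Let μ be a probability measure on ℝ with an atom at α of mass m ∈ (0,1), and p > m. With T(δ), S(δ) as above and D(δ) = δ²T(δ)² + S(δ)² + 1, one has lim_{δ→0+} p·T(δ)/D(δ) = p/m > 1. -/
/-!
With `A δ = δ² T δ` and `B δ = δ S δ`, multiplying numerator and denominator by `δ²` gives
`p T / D = p A / (A² + B² + δ²)`. As `δ → 0+` the kernels `δ² / ((α - t)² + δ²)` and
`δ (α - t) / ((α - t)² + δ²)` are bounded by `1` and `1/2` and converge pointwise to the indicator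
of `{α}` and to `0`, so by dominated convergence `A → μ {α} = m` and `B → 0`.
Hence `p T / D → p m / m² = p / m`.
-/

open MeasureTheory Filter Topology

lemma sq_div_sq_add_sq_le_one (x δ : ℝ) : δ ^ 2 / (x ^ 2 + δ ^ 2) ≤ 1 :=
  div_le_one_of_le₀ (by nlinarith) (by positivity)

lemma abs_mul_div_sq_add_sq_le_half (x δ : ℝ) : |δ * (x / (x ^ 2 + δ ^ 2))| ≤ 1 / 2 := by
  rw [mul_div_assoc', abs_div, abs_of_nonneg (by positivity : 0 ≤ x ^ 2 + δ ^ 2), abs_mul]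
  apply div_le_of_le_mul₀ (by positivity) (by norm_num)
  nlinarith [sq_nonneg (|δ| - |x|), sq_abs δ, sq_abs x]

lemma tendsto_sq_div_sq_add_sq_nhdsGT (x : ℝ) :
    Tendsto (fun δ : ℝ => δ ^ 2 / (x ^ 2 + δ ^ 2)) (𝓝[>] 0)
      (𝓝 (({0} : Set ℝ).indicator 1 x)) := by
  rcases eq_or_ne x 0 with rfl | hx
  · refine tendsto_const_nhds.congr' ?_
    filter_upwards [self_mem_nhdsWithin] with δ (hδ : 0 < δ)
    simp [hδ.ne']
  · have hcont : ContinuousAt (fun δ : ℝ => δ ^ 2 / (x ^ 2 + δ ^ 2)) 0 :=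
      (continuousAt_id.pow 2).div (continuousAt_const.add (continuousAt_id.pow 2))
        (by simpa using hx)
    simpa [hx] using hcont.tendsto.mono_left nhdsWithin_le_nhds

lemma tendsto_mul_div_sq_add_sq_nhdsGT (x : ℝ) :
    Tendsto (fun δ : ℝ => δ * (x / (x ^ 2 + δ ^ 2))) (𝓝[>] 0) (𝓝 0) := by
  rcases eq_or_ne x 0 with rfl | hx
  · simp
  · have hcont : ContinuousAt (fun δ : ℝ => δ * (x / (x ^ 2 + δ ^ 2))) 0 :=
      continuousAt_id.mul (continuousAt_const.div (continuousAt_const.add (continuousAt_id.pow 2))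
        (by simpa using hx))
    simpa using hcont.tendsto.mono_left nhdsWithin_le_nhds

section Integrals

variable (μ : Measure ℝ) [IsFiniteMeasure μ] (α : ℝ)

theorem tendsto_sq_mul_integral_inv_sq_add_sq :
    Tendsto (fun δ : ℝ => δ ^ 2 * ∫ t, 1 / ((α - t) ^ 2 + δ ^ 2) ∂μ) (𝓝[>] 0)
      (𝓝 (μ.real {α})) := by
  have hind : ∀ t, ({0} : Set ℝ).indicator (1 : ℝ → ℝ) (α - t) = ({α} : Set ℝ).indicator 1 t := by
    intro t
    simp [Set.indicator_apply, sub_eq_zero, eq_comm]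
  simp_rw [← integral_const_mul, mul_one_div, ← integral_indicator_one (measurableSet_singleton α),
    ← hind]
  refine tendsto_integral_filter_of_norm_le_const ?_ ⟨1, ?_⟩
    (ae_of_all _ fun t => tendsto_sq_div_sq_add_sq_nhdsGT (α - t))
  · filter_upwards [self_mem_nhdsWithin] with δ (hδ : 0 < δ)
    exact (Continuous.div (by fun_prop) (by fun_prop) fun t => by positivity).aestronglyMeasurable
  · refine Eventually.of_forall fun δ => ae_of_all _ fun t => ?_
    rw [Real.norm_of_nonneg (by positivity)]
    exact sq_div_sq_add_sq_le_one _ _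

theorem tendsto_mul_integral_div_sq_add_sq :
    Tendsto (fun δ : ℝ => δ * ∫ t, (α - t) / ((α - t) ^ 2 + δ ^ 2) ∂μ) (𝓝[>] 0) (𝓝 0) := by
  have hmeas : ∀ᶠ δ in 𝓝[>] (0 : ℝ),
      AEStronglyMeasurable (fun t => δ * ((α - t) / ((α - t) ^ 2 + δ ^ 2))) μ := by
    filter_upwards [self_mem_nhdsWithin] with δ (hδ : 0 < δ)
    exact (Continuous.mul continuous_const
      (Continuous.div (by fun_prop) (by fun_prop) fun t => by positivity)).aestronglyMeasurable
  simp_rw [← integral_const_mul]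
  simpa using tendsto_integral_filter_of_norm_le_const hmeas
    ⟨1 / 2, .of_forall fun δ => ae_of_all _ fun t => abs_mul_div_sq_add_sq_le_half _ _⟩
    (ae_of_all _ fun t => tendsto_mul_div_sq_add_sq_nhdsGT (α - t))

end Integrals

theorem tendsto_div_sq_mul_sq_add_sq_add_one {T S : ℝ → ℝ} {m : ℝ}
    (hT : Tendsto (fun δ => δ ^ 2 * T δ) (𝓝[>] 0) (𝓝 m))
    (hS : Tendsto (fun δ => δ * S δ) (𝓝[>] 0) (𝓝 0)) (hm : m ≠ 0) :
    Tendsto (fun δ => T δ / (δ ^ 2 * T δ ^ 2 + S δ ^ 2 + 1)) (𝓝[>] 0) (𝓝 m⁻¹) := by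
  have hδ : Tendsto (fun δ : ℝ => δ) (𝓝[>] 0) (𝓝 0) := tendsto_nhdsWithin_of_tendsto_nhds tendsto_id
  have hlim := hT.div ((hT.pow 2).add (hS.pow 2) |>.add (hδ.pow 2)) (by simpa using hm)
  rw [show m / (m ^ 2 + 0 ^ 2 + 0 ^ 2) = m⁻¹ by simp [sq]] at hlim
  refine hlim.congr' ?_
  filter_upwards [self_mem_nhdsWithin] with δ (hδ : 0 < δ)
  rw [Pi.div_apply, ← mul_div_mul_left (T δ) _ (pow_ne_zero 2 hδ.ne')]
  congr 1
  ring

theorem atom_limit_pTD_general (μ : Measure ℝ) [IsProbabilityMeasure μ] (α : ℝ)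
    (m : ℝ) (hm : m = (μ {α}).toReal) (hm0 : 0 < m)
    (p : ℝ) (hp : m < p)
    (T S D : ℝ → ℝ)
    (hT : ∀ δ, T δ = ∫ t, 1 / ((α - t) ^ 2 + δ ^ 2) ∂μ)
    (hS : ∀ δ, S δ = ∫ t, (α - t) / ((α - t) ^ 2 + δ ^ 2) ∂μ)
    (hD : ∀ δ, D δ = δ ^ 2 * T δ ^ 2 + S δ ^ 2 + 1) :
    Tendsto (fun δ => p * T δ / D δ) (nhdsWithin 0 (Set.Ioi 0)) (nhds (p / m)) ∧
      1 < p / m := by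
  have hTm : Tendsto (fun δ => δ ^ 2 * T δ) (𝓝[>] 0) (𝓝 m) := by
    simpa only [hT, hm, measureReal_def] using tendsto_sq_mul_integral_inv_sq_add_sq μ α
  have hS0 : Tendsto (fun δ => δ * S δ) (𝓝[>] 0) (𝓝 0) := by
    simpa only [hS] using tendsto_mul_integral_div_sq_add_sq μ α
  refine ⟨?_, (one_lt_div hm0).mpr hp⟩
  simpa only [hD, mul_div_assoc, div_eq_mul_inv p m] using
    (tendsto_div_sq_mul_sq_add_sq_add_one hTm hS0 hm0.ne').const_mul p

theorem atom_limit_pTD (μ : Measure ℝ) [IsProbabilityMeasure μ] (α : ℝ)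
    (m : ℝ) (hm : m = (μ {α}).toReal) (hm0 : 0 < m) (hm1 : m < 1)
    (p : ℝ) (hp : m < p)
    (T S D : ℝ → ℝ)
    (hT : ∀ δ, T δ = ∫ t, 1 / ((α - t) ^ 2 + δ ^ 2) ∂μ)
    (hS : ∀ δ, S δ = ∫ t, (α - t) / ((α - t) ^ 2 + δ ^ 2) ∂μ)
    (hD : ∀ δ, D δ = δ ^ 2 * T δ ^ 2 + S δ ^ 2 + 1) :
    Tendsto (fun δ => p * T δ / D δ) (nhdsWithin 0 (Set.Ioi 0)) (nhds (p / m)) ∧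
      1 < p / m :=
  atom_limit_pTD_general μ α m hm hm0 p hp T S D hT hS hD
end

section
/- Let μ be a Borel probability measure on ℝ, α, β ∈ ℝ, δ > 0, and define S, T, D as in the paper: S = ∫(α−t)/((α−t)²+β²+δ²)dμ, T = ∫1/((α−t)²+β²+δ²)dμ, D = δ²T² + S² + (1−βT)². Then ∂D/∂β − (β/δ)·∂D/∂δ = −2T. -/
/-!
`S` and `T` depend on `(β, δ)` only through `s = β² + δ²`, and they are differentiable in `s > 0`
by dominated convergence. Hence `∂_β − (β/δ) ∂_δ` annihilates them, and applied to
`D = δ²T² + S² + (1 − βT)²` it only sees the explicit `δ²` and `β`: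
`−(β/δ) · 2δT² + 2(1 − βT)(−T) = −2T`.
-/

open MeasureTheory

noncomputable def Sfun (μ : Measure ℝ) (α β δ : ℝ) : ℝ :=
  ∫ t, (α - t) / ((α - t) ^ 2 + β ^ 2 + δ ^ 2) ∂μ

noncomputable def Tfun (μ : Measure ℝ) (α β δ : ℝ) : ℝ :=
  ∫ t, 1 / ((α - t) ^ 2 + β ^ 2 + δ ^ 2) ∂μ

noncomputable def Dfun (μ : Measure ℝ) (α β δ : ℝ) : ℝ :=
  δ ^ 2 * Tfun μ α β δ ^ 2 + Sfun μ α β δ ^ 2 + (1 - β * Tfun μ α β δ) ^ 2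

section IntegralDivAdd

variable {X : Type*} [MeasurableSpace X] {μ : Measure X} {c φ : X → ℝ} {s₀ : ℝ}

theorem hasDerivAt_integral_div_add (hc : Measurable c) (hφ : Measurable φ) (hφ0 : ∀ x, 0 ≤ φ x)
    (hs₀ : 0 < s₀) (hint : Integrable (fun x => c x / (φ x + s₀)) μ) :
    HasDerivAt (fun s => ∫ x, c x / (φ x + s) ∂μ) (∫ x, -(c x / (φ x + s₀) ^ 2) ∂μ) s₀ := by
  have hball : ∀ s ∈ Metric.ball s₀ (s₀ / 2), ∀ x, s₀ / 2 < φ x + s ∧ (φ x + s₀) / 2 < φ x + s := by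
    intro s hs x
    rw [Metric.mem_ball, Real.dist_eq, abs_lt] at hs
    constructor <;> linarith [hφ0 x]
  have hbound : ∀ x, ∀ s ∈ Metric.ball s₀ (s₀ / 2),
      ‖-(c x / (φ x + s) ^ 2)‖ ≤ 4 / s₀ * ‖c x / (φ x + s₀)‖ := by
    intro x s hs
    obtain ⟨h₁, h₂⟩ := hball s hs x
    have hφs₀ : 0 < φ x + s₀ := by linarith [hφ0 x]
    rw [norm_neg, norm_div, norm_div, norm_pow, Real.norm_of_nonneg hφs₀.le,
      Real.norm_of_nonneg (r := φ x + s) (by linarith)]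
    calc ‖c x‖ / (φ x + s) ^ 2 ≤ ‖c x‖ / (s₀ / 2 * ((φ x + s₀) / 2)) := by
          gcongr
          rw [sq]
          exact mul_le_mul h₁.le h₂.le (by positivity) (by linarith)
      _ = 4 / s₀ * (‖c x‖ / (φ x + s₀)) := by field_simp; ring
  have hderiv : ∀ x, ∀ s ∈ Metric.ball s₀ (s₀ / 2),
      HasDerivAt (fun s => c x / (φ x + s)) (-(c x / (φ x + s) ^ 2)) s := by
    intro x s hs
    have hne : φ x + s ≠ 0 := by linarith [(hball s hs x).1]
    exact ((hasDerivAt_const s (c x)).fun_div ((hasDerivAt_id' s).const_add (φ x)) hne).congr_deriv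
      (by ring)
  exact (hasDerivAt_integral_of_dominated_loc_of_deriv_le (Metric.ball_mem_nhds s₀ (by linarith))
    (Filter.Eventually.of_forall fun s => (hc.div (hφ.add_const s)).aestronglyMeasurable) hint
    ((hc.div ((hφ.add_const s₀).pow_const 2)).neg.aestronglyMeasurable)
    (Filter.Eventually.of_forall hbound) (hint.norm.const_mul _)
    (Filter.Eventually.of_forall hderiv)).2

end IntegralDivAdd

theorem integrable_one_div_sq_add {μ : Measure ℝ} [IsFiniteMeasure μ] (α : ℝ) {s : ℝ} (hs : 0 < s) :
    Integrable (fun t => 1 / ((α - t) ^ 2 + s)) μ := by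
  refine Integrable.of_bound (Measurable.aestronglyMeasurable (by fun_prop)) (1 / s)
    (ae_of_all _ fun t => ?_)
  have hpos : 0 < (α - t) ^ 2 + s := by positivity
  rw [norm_div, norm_one, Real.norm_of_nonneg hpos.le]
  gcongr
  exact le_add_of_nonneg_left (sq_nonneg _)

theorem integrable_div_sq_add {μ : Measure ℝ} [IsFiniteMeasure μ] (α : ℝ) {s : ℝ} (hs : 0 < s) :
    Integrable (fun t => (α - t) / ((α - t) ^ 2 + s)) μ := by
  refine Integrable.of_bound (Measurable.aestronglyMeasurable (by fun_prop)) (1 + 1 / s)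
    (ae_of_all _ fun t => ?_)
  have hpos : 0 < (α - t) ^ 2 + s := by positivity
  have hquot : 0 ≤ (α - t) ^ 2 / s := by positivity
  rw [norm_div, Real.norm_eq_abs, Real.norm_of_nonneg hpos.le, div_le_iff₀ hpos]
  calc |α - t| ≤ (α - t) ^ 2 + 1 := by nlinarith [sq_abs (α - t), sq_nonneg (|α - t| - 1)]
    _ ≤ (1 + 1 / s) * ((α - t) ^ 2 + s) := by
      rw [add_mul, one_div_mul_eq_div, add_div, div_self hs.ne']
      linarith

theorem hasDerivAt_comp_sq_add_sq_left {F : ℝ → ℝ} {F' β δ : ℝ}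
    (hF : HasDerivAt F F' (β ^ 2 + δ ^ 2)) :
    HasDerivAt (fun b => F (b ^ 2 + δ ^ 2)) (F' * (2 * β)) β := by
  have hinner : HasDerivAt (fun b => b ^ 2 + δ ^ 2) (2 * β) β := by
    simpa using (hasDerivAt_pow 2 β).add_const (δ ^ 2)
  exact hF.comp β hinner

theorem hasDerivAt_comp_sq_add_sq_right {F : ℝ → ℝ} {F' β δ : ℝ}
    (hF : HasDerivAt F F' (β ^ 2 + δ ^ 2)) :
    HasDerivAt (fun d => F (β ^ 2 + d ^ 2)) (F' * (2 * δ)) δ := by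
  have hinner : HasDerivAt (fun d => β ^ 2 + d ^ 2) (2 * δ) δ := by
    simpa using (hasDerivAt_pow 2 δ).const_add (β ^ 2)
  exact hF.comp δ hinner

theorem deriv_sub_div_mul_deriv_of_sq_add_sq {T S : ℝ → ℝ} {T' S' β δ : ℝ}
    (hT : HasDerivAt T T' (β ^ 2 + δ ^ 2)) (hS : HasDerivAt S S' (β ^ 2 + δ ^ 2)) (hδ : δ ≠ 0) :
    deriv (fun b => δ ^ 2 * T (b ^ 2 + δ ^ 2) ^ 2 + S (b ^ 2 + δ ^ 2) ^ 2
        + (1 - b * T (b ^ 2 + δ ^ 2)) ^ 2) β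
      - β / δ * deriv (fun d => d ^ 2 * T (β ^ 2 + d ^ 2) ^ 2 + S (β ^ 2 + d ^ 2) ^ 2
        + (1 - β * T (β ^ 2 + d ^ 2)) ^ 2) δ
      = -2 * T (β ^ 2 + δ ^ 2) := by
  have hTβ := hasDerivAt_comp_sq_add_sq_left hT
  have hSβ := hasDerivAt_comp_sq_add_sq_left hS
  have hTδ := hasDerivAt_comp_sq_add_sq_right hT
  have hSδ := hasDerivAt_comp_sq_add_sq_right hS
  have hDβ := (((hTβ.fun_pow 2).const_mul (δ ^ 2)).fun_add (hSβ.fun_pow 2)).fun_add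
    ((((hasDerivAt_id' β).fun_mul hTβ).const_sub 1).fun_pow 2)
  have hDδ := ((((hasDerivAt_pow 2 δ).fun_mul (hTδ.fun_pow 2))).fun_add (hSδ.fun_pow 2)).fun_add
    (((hTδ.const_mul β).const_sub 1).fun_pow 2)
  rw [hDβ.deriv, hDδ.deriv]
  field_simp
  ring

theorem D_derivative_identity (μ : Measure ℝ) [IsProbabilityMeasure μ]
    (α β δ : ℝ) (hδ : 0 < δ) :
    deriv (fun b => Dfun μ α b δ) β - (β / δ) * deriv (fun d => Dfun μ α β d) δ =
      -2 * Tfun μ α β δ := by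
  have hs : 0 < β ^ 2 + δ ^ 2 := by positivity
  have hT : HasDerivAt (fun s => ∫ t, 1 / ((α - t) ^ 2 + s) ∂μ) _ (β ^ 2 + δ ^ 2) :=
    hasDerivAt_integral_div_add measurable_const (by fun_prop) (fun t => sq_nonneg (α - t)) hs
      (integrable_one_div_sq_add α hs)
  have hS : HasDerivAt (fun s => ∫ t, (α - t) / ((α - t) ^ 2 + s) ∂μ) _ (β ^ 2 + δ ^ 2) :=
    hasDerivAt_integral_div_add (by fun_prop) (by fun_prop) (fun t => sq_nonneg (α - t)) hs
      (integrable_div_sq_add α hs)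
  have hassoc (b d t : ℝ) : (α - t) ^ 2 + b ^ 2 + d ^ 2 = (α - t) ^ 2 + (b ^ 2 + d ^ 2) :=
    add_assoc _ _ _
  simp only [Dfun, Tfun, Sfun, hassoc]
  exact deriv_sub_div_mul_deriv_of_sq_add_sq hT hS hδ.ne'
end
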